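/- Let E and F be normed vector spaces over ℂ, let U ⊆ E be open, and let s : U → F be differentiable at a point a ∈ U. Define s̃ : U × (F →L[ℂ] ℂ) → ℂ by s̃(x, φ) = φ(s(x)). Then for any φ ∈ F →L[ℂ] ℂ, the Fréchet derivative of s̃ at (a, φ) is zero if and only if s(a) = 0 and the composition φ ∘ (Ds)(a) : E → ℂ is zero, where (Ds)(a) denotes the Fréchet derivative of s at a. (In other words, the critical locus of s̃ is cut out by the equations s = 0 and (Ds)*(τ) = 0, where τ is the tautological point of the dual space.) -/
import Mathlib

/-- Let `E`, `F` be normed vector spaces over `ℂ`, `U ⊆ E` open, and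
`s` differentiable at `a ∈ U` with Fréchet derivative `ds`. Define
`s̃ (x, φ) = φ (s x)`. Then for any `φ : F →L[ℂ] ℂ`, the Fréchet derivative of `s̃` at
`(a, φ)` vanishes if and only if `s a = 0` and `φ ∘ ds = 0`; i.e. the critical locus of
`s̃` is cut out by the equations `s = 0` and `(Ds)^* τ = 0`. -/
theorem tilde_s_critical_locus
    {E F : Type*} [NormedAddCommGroup E] [NormedSpace ℂ E]
    [NormedAddCommGroup F] [NormedSpace ℂ F]
    (U : Set E) (hU : IsOpen U) (a : E) (ha : a ∈ U)
    (s : E → F) (ds : E →L[ℂ] F) (hs : HasFDerivAt s ds a)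
    (φ : F →L[ℂ] ℂ) :
    fderiv ℂ (fun p : E × (F →L[ℂ] ℂ) => p.2 (s p.1)) (a, φ) = 0 ↔
      s a = 0 ∧ φ.comp ds = 0 := by
  have hc : HasFDerivAt (fun p : E × (F →L[ℂ] ℂ) => p.2)
      (ContinuousLinearMap.snd ℂ E (F →L[ℂ] ℂ)) (a, φ) := hasFDerivAt_snd
  have hu : HasFDerivAt (fun p : E × (F →L[ℂ] ℂ) => s p.1)
      (ds.comp (ContinuousLinearMap.fst ℂ E (F →L[ℂ] ℂ))) (a, φ) :=
    hs.comp (a, φ) hasFDerivAt_fst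
  have hD := (hc.clm_apply hu).fderiv
  rw [hD]
  constructor
  · intro h
    have h' : ∀ v : E, ∀ η : F →L[ℂ] ℂ,
        φ (ds v) + η (s a) = 0 := by
      intro v η
      have := ContinuousLinearMap.ext_iff.mp h (v, η)
      simpa using this
    have hsa : s a = 0 := by
      apply NormedSpace.eq_zero_of_forall_dual_eq_zero ℂ
      intro f
      have := h' 0 f
      simpa using this
    refine ⟨hsa, ?_⟩
    ext v
    have := h' v 0
    simpa [hsa] using this
  · rintro ⟨h1, h2⟩
    apply ContinuousLinearMap.ext
    rintro ⟨v, η⟩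
    have h2v : φ (ds v) = 0 := ContinuousLinearMap.ext_iff.mp h2 v
    simp [h1, h2v]
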